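/- arXiv:1607.07658 — 2 statements merged into one kernel-verified Lean document; each statement's English description precedes it below -/
import Mathlib

section
/- The cardinality of S(Y,Y',l_0,i_0) equals min(|Y|, l_0) · (i_0 - l_0 - 1)! · (n - i_0)! · Π_{j=1}^{l_0} (x_j - j + 1). -/
open Finset

namespace Secretary

/-- Binomial coefficient on integers: zero when `b < 0` or `b > a`. -/
noncomputable def Cb (a b : ℤ) : ℝ :=
  if 0 ≤ b ∧ b ≤ a then (Nat.choose a.toNat b.toNat : ℝ) else 0

/-- The value `π(i)` of a permutation of `{1,...,n}` in 1-based indexing. -/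
def pv (n : ℕ) (π : Equiv.Perm (Fin n)) (i : ℕ) : ℕ :=
  if h : i - 1 < n then ((π ⟨i - 1, h⟩ : Fin n) : ℕ) + 1 else 0

/-- The relative rank `ρ_π(i)`: the number of `j ∈ {1,...,i}` with `π(j) ≤ π(i)`. -/
def rho (n : ℕ) (π : Equiv.Perm (Fin n)) (i : ℕ) : ℕ :=
  ((Finset.Icc 1 i).filter fun j => pv n π j ≤ pv n π i).card

/-- Extension of a sequence `s` with `s (k+1) = n - 1`. -/
def sExt (n k : ℕ) (s : ℕ → ℕ) (l : ℕ) : ℕ := if l = k + 1 then n - 1 else s l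

/-- `i` is a `(π, l, w)`-element. -/
def IsElem (n k : ℕ) (s : ℕ → ℕ) (π : Equiv.Perm (Fin n)) (l i : ℕ) : Prop :=
  sExt n k s l < i ∧ i ≤ sExt n k s (l + 1) ∧ rho n π i ≤ l

/-- `l` is a `w`-threshold of `π`. -/
def IsThreshold (n k : ℕ) (s : ℕ → ℕ) (π : Equiv.Perm (Fin n)) (l : ℕ) : Prop :=
  1 ≤ l ∧ l ≤ k ∧ ∃ i, IsElem n k s π l i

open Classical in
/-- `π` is a lucky permutation for the sequence `w = s`. -/
def Lucky (n k : ℕ) (s : ℕ → ℕ) (π : Equiv.Perm (Fin n)) : Prop :=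
  if ∃ l, IsThreshold n k s π l then
    pv n π (sInf {i | IsElem n k s π (sInf {l | IsThreshold n k s π l}) i}) ≤ k
  else pv n π n ≤ k

/-- The maps `r_l` (first argument an integer `l ≤ k`). -/
noncomputable def rr (n k : ℕ) (l : ℤ) (x : ℕ) : ℝ :=
  if l < 0 then 0
  else if l = 0 then
    1 / (x : ℝ) - (k : ℝ) / n - Cb ((n : ℤ) - x - 1) k / ((x : ℝ) * Cb n k)
      - (1 / Cb n k) * ∑ j ∈ Finset.Icc 1 x, Cb ((n : ℤ) - j - 1) ((k : ℤ) - 1) / (j : ℝ)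
  else
    ((Nat.factorial (x - l.toNat - 1) : ℝ) / (Nat.factorial x : ℝ)) *
      (1 - (1 / ((l : ℝ) * Cb n x)) *
        ∑ j ∈ Finset.range (l.toNat + 1),
          ((l : ℝ) - j) * Cb k j * Cb ((n : ℤ) - k) ((x : ℤ) - j))

/-- The constant `δ_{k,n}`. -/
noncomputable def delta (n k : ℕ) : ℝ :=
  if k = 1 then -(1 / (n : ℝ)) * ∑ j ∈ Finset.Icc 1 (n - 1), (1 : ℝ) / j
  else (Nat.factorial (n - k) : ℝ) / (Nat.factorial n : ℝ)

/-- The maps `d_l` for `0 ≤ l ≤ k`. -/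
noncomputable def d (n k : ℕ) (l x : ℕ) : ℝ :=
  if l = 0 then
    -1 + (k : ℝ) * x / n + Cb ((n : ℤ) - x - 1) k / Cb n k
      + ((x : ℝ) / Cb n k) * ∑ j ∈ Finset.Icc 1 x, Cb ((n : ℤ) - j - 1) ((k : ℤ) - 1) / (j : ℝ)
  else if l = 1 then
    -((k : ℝ) / n) - (1 / Cb n k) * ∑ j ∈ Finset.Icc 1 x, Cb ((n : ℤ) - j - 1) ((k : ℤ) - 1) / (j : ℝ)
  else
    ((k : ℝ) * (Nat.factorial x : ℝ) * (Nat.factorial (n - l - x) : ℝ) /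
        ((l : ℝ) * ((l : ℝ) - 1) * (Nat.factorial n : ℝ))) *
      ∑ j ∈ Finset.range (l - 1), Cb ((k : ℤ) - 1) j * Cb ((n : ℤ) - k) ((x : ℤ) + l - j - 1)

/-- The maps `c_l(x) = d_l(x - l)`. -/
noncomputable def c (n k l x : ℕ) : ℝ := d n k l (x - l)

/-- The constant `ξ_{k,n}`. -/
noncomputable def xi (n k : ℕ) : ℝ :=
  (k : ℝ) * (Nat.factorial (n - k - 1) : ℝ) / (Nat.factorial n : ℝ)

/-- `w` (given as a 1-indexed function) is a word in `X^{(k-l)}`, i.e. its `j`-th letter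
belongs to `X_{l+j} = {l+j, ..., n-1}` for `1 ≤ j ≤ k - l`. -/
def memX (n k l : ℕ) (w : ℕ → ℕ) : Prop :=
  ∀ j ∈ Finset.Icc 1 (k - l), l + j ≤ w j ∧ w j ≤ n - 1

/-- The left-shift operator removing the first `l` letters of a word. -/
def shift (l : ℕ) (w : ℕ → ℕ) : ℕ → ℕ := fun j => w (l + j)

/-- The maps `R_{l,j}`. -/
noncomputable def Rmap (n k l : ℕ) (w : ℕ → ℕ) (j : ℕ) : ℝ :=
  if 1 ≤ j ∧ j ≤ k - l then
    rr n k ((l : ℤ) + j - 1) (w j)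
      - rr n k ((l : ℤ) + j - 1) (if j = k - l then n - 1 else w (j + 1))
  else 0

/-- The maps `Γ_{l,j,j'}`. -/
noncomputable def Gam (n k l j j' : ℕ) (w : ℕ → ℕ) : ℝ :=
  if 1 ≤ j ∧ j ≤ j' ∧ j' ≤ k - l then
    ∏ t ∈ Finset.Icc j j', ((w t : ℝ) - l - t + 1)
  else 1

/-- The maps `T_l`. -/
noncomputable def Tmap (n k l : ℕ) (w : ℕ → ℕ) : ℝ :=
  (∑ j ∈ Finset.Icc 1 (k - l), Rmap n k l w j * Gam n k l 1 j w)
    + xi n k * Gam n k l 1 (k - l) w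

/-- The maps `D_l(w) = r_{l-1}(x_1) - T_l(w)`, with `x_1 := n-1` when `l = k`. -/
noncomputable def Dmap (n k l : ℕ) (w : ℕ → ℕ) : ℝ :=
  rr n k ((l : ℤ) - 1) (if l = k then n - 1 else w 1) - Tmap n k l w

/-- The maps `F_{l,w}(x) = -c_{l-1}(x) - x·D_l(w)`. -/
noncomputable def Fmap (n k l : ℕ) (w : ℕ → ℕ) (x : ℕ) : ℝ :=
  -(c n k (l - 1) x) - (x : ℝ) * Dmap n k l w

/-- The maps `a_l`. -/
noncomputable def amap (n k l x : ℕ) : ℝ :=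
  (1 / Cb n x) * ∑ j ∈ Finset.range (l + 1), Cb k j * Cb ((n : ℤ) - k) ((x : ℤ) - j)

/-- The maps `b_l`. -/
noncomputable def bmap (n k l x : ℕ) : ℝ :=
  (1 / ((l : ℝ) * Cb n x)) *
    ∑ j ∈ Finset.range (l + 1), (j : ℝ) * Cb k j * Cb ((n : ℤ) - k) ((x : ℤ) - j)

/-- `π ∈ S(l0, i0)`: `π` is lucky for `s`, `l0` is the smallest `s`-threshold of `π`,
and `i0` is the smallest `(π, l0, s)`-element. -/
def SMem (n k : ℕ) (s : ℕ → ℕ) (l0 i0 : ℕ) (π : Equiv.Perm (Fin n)) : Prop :=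
  Lucky n k s π ∧ IsLeast {l | IsThreshold n k s π l} l0 ∧
    IsLeast {i | IsElem n k s π l0 i} i0

/-- `π ∈ S(Y, Y', l0, i0)`. -/
def SYYMem (n k : ℕ) (s : ℕ → ℕ) (Y Y' : Finset ℕ) (l0 i0 : ℕ) (π : Equiv.Perm (Fin n)) :
    Prop :=
  SMem n k s l0 i0 π ∧ ((Finset.Icc 1 i0).image (pv n π)) ∩ Finset.Icc 1 k = Y ∧
    ((Finset.Icc 1 i0).image (pv n π)) ∩ Finset.Icc (k + 1) n = Y'


/-!
A permutation lies in `S(Y, Y', l0, i0)` exactly when its first `i0` values form `Y ∪ Y'`, its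
relative rank at `i0` is at most `min(|Y|, l0)` (at most `l0` makes `i0` an `l0`-element, at
most `|Y|` makes `π(i0) ≤ k`), and at every earlier position `i` the relative rank exceeds the
number `c(i)` of thresholds `x_j < i` with `j ≤ l0` (otherwise `i` would be an element for the
threshold `c(i)`, smaller than `l0` or equal to it). The relative ranks of the first `i0` positions
can be prescribed independently of one another (Lehmer code), of the set of values occupying those
positions and of the arrangement of the other `n - i0` values. Hence the count is
`min(|Y|, l0) · ∏_{i < i0} (i - c(i)) · (n - i0)!`, and the product telescopes to
`(i0 - l0 - 1)! · ∏_{j ≤ l0} (x_j - j + 1)`.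
-/

section Ranks

variable {n : ℕ} (π : Equiv.Perm (Fin n))

lemma pv_eq {j : ℕ} (h : j - 1 < n) : pv n π j = π ⟨j - 1, h⟩ + 1 := by
  simp [pv, h]

lemma pv_val_add_one (p : Fin n) : pv n π (p + 1) = π p + 1 := by
  simp [pv]

lemma pv_mem_Icc {j : ℕ} (hj : j ∈ Icc 1 n) : pv n π j ∈ Icc 1 n := by
  rw [mem_Icc] at hj ⊢
  rw [pv_eq π (by omega)]
  omega

lemma pv_injOn : Set.InjOn (pv n π) (Icc 1 n) := by
  intro j hj j' hj' h
  simp only [coe_Icc, Set.mem_Icc] at hj hj'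
  rw [pv_eq π (by omega), pv_eq π (by omega), add_left_inj, Fin.val_inj,
    π.injective.eq_iff, Fin.mk.injEq] at h
  omega

lemma image_pv_subset {i : ℕ} (hi : i ≤ n) : (Icc 1 i).image (pv n π) ⊆ Icc 1 n :=
  image_subset_iff.mpr fun _ hj => pv_mem_Icc π (Icc_subset_Icc_right hi hj)

lemma card_image_pv {i : ℕ} (hi : i ≤ n) : #((Icc 1 i).image (pv n π)) = i := by
  rw [card_image_of_injOn ((pv_injOn π).mono (coe_subset.mpr (Icc_subset_Icc_right hi))),
    Nat.card_Icc, Nat.add_sub_cancel]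

lemma image_pv_Icc_self : (Icc 1 n).image (pv n π) = Icc 1 n :=
  eq_of_subset_of_card_le (image_pv_subset π le_rfl) (by rw [card_image_pv π le_rfl]; simp)

lemma one_le_rho {i : ℕ} (hi : 1 ≤ i) : 1 ≤ rho n π i :=
  card_pos.mpr ⟨i, by simp [hi]⟩

lemma rho_le_self (i : ℕ) : rho n π i ≤ i :=
  (card_filter_le _ _).trans (by simp)

lemma rho_eq_card_image {i : ℕ} (hi : i ≤ n) :
    rho n π i = #{v ∈ (Icc 1 i).image (pv n π) | v ≤ pv n π i} := by
  rw [rho, filter_image, card_image_of_injOn]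
  exact (pv_injOn π).mono (coe_subset.mpr ((filter_subset _ _).trans (Icc_subset_Icc_right hi)))

lemma rho_self : rho n π n = pv n π n := by
  rcases Nat.eq_zero_or_pos n with rfl | hn
  · rfl
  have hv := mem_Icc.mp (pv_mem_Icc π (j := n) (by simp; omega))
  rw [rho_eq_card_image π le_rfl, image_pv_Icc_self]
  have : {v ∈ Icc 1 n | v ≤ pv n π n} = Icc 1 (pv n π n) := by
    ext v; simp only [mem_filter, mem_Icc]; omega
  rw [this, Nat.card_Icc, Nat.add_sub_cancel]

lemma rho_eq_of_strictMono {m : ℕ} (σ : Equiv.Perm (Fin m)) (hmn : m ≤ n) {f : Fin m → Fin n}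
    (hf : StrictMono f) (h : ∀ j, π (Fin.castLE hmn j) = f (σ j)) {i : ℕ} (hi : i ≤ m) :
    rho n π i = rho m σ i := by
  refine congrArg card (filter_congr fun j hj => ?_)
  obtain ⟨hj1, hj⟩ := mem_Icc.mp hj
  rw [pv_eq π (by omega), pv_eq π (by omega), pv_eq σ (by omega), pv_eq σ (by omega)]
  have key := hf.le_iff_le (a := σ ⟨j - 1, by omega⟩) (b := σ ⟨i - 1, by omega⟩)
  rw [← h, ← h, Fin.le_def, Fin.le_def] at key
  simpa using key

lemma image_pv_eq_iff {i : ℕ} (h : i ≤ n) {V : Finset ℕ} (hV : #V = i) :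
    (Icc 1 i).image (pv n π) = V ↔ ∀ q : Fin i, (π (Fin.castLE h q) : ℕ) + 1 ∈ V := by
  have hpv (q : Fin i) : pv n π (q + 1) = π (Fin.castLE h q) + 1 :=
    pv_val_add_one π (Fin.castLE h q)
  constructor
  · rintro rfl q
    exact mem_image.mpr ⟨q + 1, by simp, hpv q⟩
  · refine fun hmem => eq_of_subset_of_card_le (image_subset_iff.mpr fun j hj => ?_)
      (by rw [hV, card_image_pv π h])
    obtain ⟨hj1, hj⟩ := mem_Icc.mp hj
    simpa [Nat.sub_add_cancel hj1] using hpv ⟨j - 1, by omega⟩ ▸ hmem ⟨j - 1, by omega⟩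

end Ranks

lemma card_filter_val_add_one_mem {n : ℕ} (D : Finset ℕ) :
    #{a : Fin n | (a : ℕ) + 1 ∈ D} = #(D ∩ Icc 1 n) := by
  refine card_bij (fun a _ => a + 1) (fun a ha => ?_)
    (fun a _ b _ h => Fin.ext (by simpa using h)) fun v hv => ?_
  · simp only [mem_filter, mem_univ, true_and] at ha
    simp [ha]
  · obtain ⟨hv, hv1, hvn⟩ : v ∈ D ∧ 1 ≤ v ∧ v ≤ n := by simpa using hv
    exact ⟨⟨v - 1, by omega⟩, by simpa [Nat.sub_add_cancel hv1], by simp; omega⟩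

section LehmerCode

/-- Extends `τ` to `Fin (m + 1)` by sending the new last position to `a`, shifting the
values of `τ` past `a`. -/
def insertLast (m : ℕ) (a : Fin (m + 1)) (τ : Equiv.Perm (Fin m)) : Equiv.Perm (Fin (m + 1)) :=
  (finSuccEquiv' (Fin.last m)).trans ((Equiv.optionCongr τ).trans (finSuccEquiv' a).symm)

variable {m : ℕ} (a : Fin (m + 1)) (τ : Equiv.Perm (Fin m))

@[simp]
lemma insertLast_last : insertLast m a τ (Fin.last m) = a := by
  simp [insertLast]

@[simp]
lemma insertLast_castSucc (j : Fin m) : insertLast m a τ j.castSucc = a.succAbove (τ j) := by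
  rw [← Fin.succAbove_last]
  simp [insertLast, -Fin.succAbove_last]

lemma insertLast_bijective : Function.Bijective fun p : Fin (m + 1) × Equiv.Perm (Fin m) =>
    insertLast m p.1 p.2 := by
  refine (Fintype.bijective_iff_injective_and_card _).mpr
    ⟨?_, by simp [Fintype.card_perm, Nat.factorial_succ]⟩
  rintro ⟨a, τ⟩ ⟨a', τ'⟩ h
  obtain rfl : a = a' := by simpa using congrArg (· (Fin.last m)) h
  refine Prod.ext rfl (Equiv.ext fun j => a.succAbove_right_injective ?_)
  simpa using congrArg (· j.castSucc) h

lemma rho_insertLast_self : rho (m + 1) (insertLast m a τ) (m + 1) = a + 1 := by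
  rw [rho_self, pv_eq _ (by omega)]
  exact congrArg (· + 1) (congrArg Fin.val (insertLast_last a τ))

lemma rho_insertLast_of_le {i : ℕ} (hi : i ≤ m) :
    rho (m + 1) (insertLast m a τ) i = rho m τ i :=
  rho_eq_of_strictMono _ τ (Nat.le_succ m) (Fin.strictMono_succAbove a)
    (fun j => insertLast_castSucc a τ j) hi

theorem card_rho_mem (m : ℕ) (C : ℕ → Finset ℕ) :
    Nat.card {σ : Equiv.Perm (Fin m) // ∀ i ∈ Icc 1 m, rho m σ i ∈ C i} =
      ∏ i ∈ Icc 1 m, #(C i ∩ Icc 1 i) := by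
  induction m with
  | zero => simp
  | succ m ih =>
    have key : ∀ p : Fin (m + 1) × Equiv.Perm (Fin m),
        (∀ i ∈ Icc 1 (m + 1), rho (m + 1) (insertLast m p.1 p.2) i ∈ C i) ↔
          ((p.1 : ℕ) + 1 ∈ C (m + 1) ∧ ∀ i ∈ Icc 1 m, rho m p.2 i ∈ C i) := by
      rintro ⟨a, τ⟩
      rw [← insert_Icc_right_eq_Icc_add_one (by omega), forall_mem_insert, rho_insertLast_self]
      refine and_congr_right fun _ => forall₂_congr fun i hi => ?_
      rw [rho_insertLast_of_le a τ (mem_Icc.mp hi).2]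
    rw [← Nat.card_congr
        ((Equiv.ofBijective _ insertLast_bijective).subtypeEquiv fun p => (key p).symm),
      Nat.card_congr (Equiv.subtypeProdEquivProd
        (p := fun a : Fin (m + 1) => (a : ℕ) + 1 ∈ C (m + 1))
        (q := fun τ => ∀ i ∈ Icc 1 m, rho m τ i ∈ C i)), Nat.card_prod, ih,
      Nat.card_eq_fintype_card, Fintype.card_subtype, card_filter_val_add_one_mem,
      prod_Icc_succ_top (by omega), mul_comm]

end LehmerCode

section Gluing

variable {n i0 : ℕ}

def splitPositions (h : i0 ≤ n) : Fin n ≃ Fin i0 ⊕ Fin (n - i0) :=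
  (finCongr (by omega)).trans finSumFinEquiv.symm

lemma splitPositions_symm_inl (h : i0 ≤ n) (q : Fin i0) :
    (splitPositions h).symm (Sum.inl q) = Fin.castLE h q :=
  Fin.ext (by simp [splitPositions])

/-- Enumerates `V` increasingly by `Fin i0` and its complement increasingly by `Fin (n - i0)`. -/
def splitValues (V : Finset (Fin n)) (hV : #V = i0) : Fin i0 ⊕ Fin (n - i0) ≃ Fin n :=
  (Equiv.sumCongr (V.orderIsoOfFin hV).toEquiv
    ((Vᶜ.orderIsoOfFin (by simp [card_compl, hV])).toEquiv.trans
      (Equiv.subtypeEquivRight fun _ => mem_compl))).trans (Equiv.sumCompl (· ∈ V))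

lemma splitValues_inl (V : Finset (Fin n)) (hV : #V = i0) (q : Fin i0) :
    splitValues V hV (Sum.inl q) = V.orderEmbOfFin hV q := by
  simp [splitValues]

/-- The permutation of `Fin n` that maps the first `i0` positions onto `V` in the pattern of
`p.1`, and the remaining positions onto `Vᶜ` in the pattern of `p.2`. -/
def glue (h : i0 ≤ n) (V : Finset (Fin n)) (hV : #V = i0)
    (p : Equiv.Perm (Fin i0) × Equiv.Perm (Fin (n - i0))) : Equiv.Perm (Fin n) :=
  Equiv.equivCongr (splitPositions h).symm (splitValues V hV) (Equiv.Perm.sumCongrHom _ _ p)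

variable (h : i0 ≤ n) (V : Finset (Fin n)) (hV : #V = i0)

lemma glue_injective : Function.Injective (glue h V hV) :=
  (Equiv.equivCongr _ _).injective.comp Equiv.Perm.sumCongrHom_injective

lemma glue_castLE (p : Equiv.Perm (Fin i0) × Equiv.Perm (Fin (n - i0))) (q : Fin i0) :
    glue h V hV p (Fin.castLE h q) = V.orderEmbOfFin hV (p.1 q) := by
  rw [← splitPositions_symm_inl h, ← splitValues_inl V hV]
  simp [glue]

lemma rho_glue (p : Equiv.Perm (Fin i0) × Equiv.Perm (Fin (n - i0))) {i : ℕ} (hi : i ≤ i0) :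
    rho n (glue h V hV p) i = rho i0 p.1 i :=
  rho_eq_of_strictMono _ p.1 h (V.orderEmbOfFin hV).strictMono (glue_castLE h V hV p) hi

lemma exists_glue_eq {π : Equiv.Perm (Fin n)} (hπ : ∀ q : Fin i0, π (Fin.castLE h q) ∈ V) :
    ∃ p, glue h V hV p = π := by
  set ψ := (Equiv.equivCongr (splitPositions h).symm (splitValues V hV)).symm π
  have hψ : Set.MapsTo ψ (Set.range Sum.inl) (Set.range Sum.inl) := by
    rintro _ ⟨q, rfl⟩
    obtain ⟨r, hr⟩ := (V.orderIsoOfFin hV).surjective ⟨_, hπ q⟩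
    refine ⟨r, ?_⟩
    simp only [ψ, Equiv.equivCongr_symm, Equiv.equivCongr_apply_apply, Equiv.symm_symm]
    rw [Equiv.eq_symm_apply, splitValues_inl, splitPositions_symm_inl]
    simpa using congrArg Subtype.val hr
  obtain ⟨p, hp⟩ := Equiv.Perm.mem_sumCongrHom_range_of_perm_mapsTo_inl hψ
  exact ⟨p, by rw [glue, hp]; exact Equiv.apply_symm_apply _ _⟩

end Gluing

theorem card_filter_rho_mem_and_mapsTo {n i0 : ℕ} (h : i0 ≤ n) (V : Finset (Fin n))
    (hV : #V = i0) (C : ℕ → Finset ℕ) :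
    #{π : Equiv.Perm (Fin n) |
        (∀ i ∈ Icc 1 i0, rho n π i ∈ C i) ∧ ∀ q : Fin i0, π (Fin.castLE h q) ∈ V} =
      Nat.card {σ : Equiv.Perm (Fin i0) // ∀ i ∈ Icc 1 i0, rho i0 σ i ∈ C i} *
        (n - i0).factorial := by
  classical
  have hfilter : ({π : Equiv.Perm (Fin n) | (∀ i ∈ Icc 1 i0, rho n π i ∈ C i) ∧
        ∀ q : Fin i0, π (Fin.castLE h q) ∈ V} : Finset _) =
      (({σ | ∀ i ∈ Icc 1 i0, rho i0 σ i ∈ C i} : Finset _) ×ˢ univ).image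
        (glue h V hV) := by
    ext π
    simp only [mem_filter, mem_univ, true_and, mem_image, mem_product, and_true]
    constructor
    · rintro ⟨hrho, hπ⟩
      obtain ⟨p, rfl⟩ := exists_glue_eq h V hV hπ
      exact ⟨p, fun i hi => rho_glue h V hV p (mem_Icc.mp hi).2 ▸ hrho i hi, rfl⟩
    · rintro ⟨p, hrho, rfl⟩
      exact ⟨fun i hi => (rho_glue h V hV p (mem_Icc.mp hi).2).symm ▸ hrho i hi,
        fun q => glue_castLE h V hV p q ▸ V.orderEmbOfFin_mem hV _⟩
  rw [hfilter, card_image_of_injective _ (glue_injective h V hV), card_product, card_univ,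
    Fintype.card_perm, Fintype.card_fin, Nat.card_eq_fintype_card, Fintype.card_subtype]
  congr

theorem card_rho_mem_and_image_pv_eq {n i0 : ℕ} (h : i0 ≤ n) {V : Finset ℕ}
    (hV : V ⊆ Icc 1 n) (hVcard : #V = i0) (C : ℕ → Finset ℕ) :
    Nat.card {π : Equiv.Perm (Fin n) //
        (∀ i ∈ Icc 1 i0, rho n π i ∈ C i) ∧ (Icc 1 i0).image (pv n π) = V} =
      (∏ i ∈ Icc 1 i0, #(C i ∩ Icc 1 i)) * (n - i0).factorial := by
  set W : Finset (Fin n) := {x | (x : ℕ) + 1 ∈ V}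
  have hW : #W = i0 := by rw [card_filter_val_add_one_mem, inter_eq_left.mpr hV, hVcard]
  simp_rw [image_pv_eq_iff _ h hVcard]
  rw [Nat.card_eq_fintype_card, Fintype.card_subtype, ← card_rho_mem]
  convert card_filter_rho_mem_and_mapsTo h W hW C using 3
  simp [W]

section Thresholds

def numPassed (s : ℕ → ℕ) (L i : ℕ) : ℕ := #{j ∈ Icc 1 L | s j < i}

variable {s : ℕ → ℕ} {L : ℕ}

lemma numPassed_le (i : ℕ) : numPassed s L i ≤ L :=
  (card_filter_le _ _).trans (by simp)

lemma numPassed_eq_self {i : ℕ} (h : ∀ j ∈ Icc 1 L, s j < i) : numPassed s L i = L := by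
  rw [numPassed, filter_true_of_mem h, Nat.card_Icc, Nat.add_sub_cancel]

lemma numPassed_succ (i : ℕ) :
    numPassed s (L + 1) i = numPassed s L i + if s (L + 1) < i then 1 else 0 := by
  rw [numPassed, ← insert_Icc_right_eq_Icc_add_one (by omega), filter_insert]
  split_ifs <;> simp [numPassed]

lemma lt_iff_le_numPassed (hs : MonotoneOn s (Set.Icc 1 L)) {i j : ℕ} (hj : j ∈ Icc 1 L) :
    s j < i ↔ j ≤ numPassed s L i := by
  obtain ⟨hj1, hjL⟩ := mem_Icc.mp hj
  constructor
  · intro hsj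
    calc j = #(Icc 1 j) := by simp
      _ ≤ numPassed s L i := card_le_card fun x hx => by
        obtain ⟨hx1, hxj⟩ := mem_Icc.mp hx
        exact mem_filter.mpr ⟨mem_Icc.mpr ⟨hx1, hxj.trans hjL⟩,
          (hs ⟨hx1, hxj.trans hjL⟩ ⟨hj1, hjL⟩ hxj).trans_lt hsj⟩
  · intro hle
    by_contra hge
    have : numPassed s L i ≤ #(Icc 1 (j - 1)) := card_le_card fun x hx => by
      obtain ⟨hx, hsx⟩ := mem_filter.mp hx
      obtain ⟨hx1, hxL⟩ := mem_Icc.mp hx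
      have : x < j :=
        lt_of_not_ge fun hjx => hge ((hs ⟨hj1, hjL⟩ ⟨hx1, hxL⟩ hjx).trans_lt hsx)
      exact mem_Icc.mpr ⟨hx1, by omega⟩
    simp only [Nat.card_Icc] at this
    omega

theorem prod_sub_numPassed (m : ℕ) (hs : MonotoneOn s (Set.Icc 1 L))
    (hb : ∀ j ∈ Icc 1 L, j ≤ s j ∧ s j ≤ m) :
    ∏ i ∈ Icc 1 m, (i - numPassed s L i) =
      (m - L).factorial * ∏ j ∈ Icc 1 L, (s j - j + 1) := by
  induction m generalizing L with
  | zero =>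
    obtain rfl : L = 0 := by
      by_contra hL
      have := hb 1 (by simp; omega)
      omega
    simp
  | succ m ihm =>
    induction L with
    | zero =>
      simp [numPassed, ← Ico_add_one_right_eq_Icc, prod_Ico_id_eq_factorial]
    | succ L ihL =>
      have hsL : MonotoneOn s (Set.Icc 1 L) := hs.mono (Set.Icc_subset_Icc_right (by omega))
      have hbL := hb (L + 1) (by simp)
      have hmono (j) (hj : j ∈ Icc 1 (L + 1)) : s j ≤ s (L + 1) :=
        hs (by simpa using hj) ⟨by omega, le_rfl⟩ (mem_Icc.mp hj).2
      rw [prod_Icc_succ_top (by omega : 1 ≤ L + 1)]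
      -- either every threshold lies below `m + 1` and the factor at `m + 1` is `m - L`, or the
      -- last threshold is `m + 1`, is never passed, and can be dropped
      by_cases hlast : s (L + 1) ≤ m
      · have hb' (j) (hj : j ∈ Icc 1 (L + 1)) : j ≤ s j ∧ s j ≤ m :=
          ⟨(hb j hj).1, (hmono j hj).trans hlast⟩
        rw [prod_Icc_succ_top (by omega), ihm hs hb', prod_Icc_succ_top (by omega : 1 ≤ L + 1),
          numPassed_eq_self fun j hj => by have := hmono j hj; omega,
          show m + 1 - (L + 1) = (m - (L + 1)) + 1 by omega, Nat.factorial_succ]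
        ring
      · have hpass (i) (hi : i ∈ Icc 1 (m + 1)) :
            i - numPassed s (L + 1) i = i - numPassed s L i := by
          rw [numPassed_succ, if_neg (by simp at hi; omega), add_zero]
        rw [prod_congr rfl hpass, ihL hsL fun j hj => hb j (by simp at hj ⊢; omega),
          show m + 1 - L = (m + 1 - (L + 1)) + 1 by omega, Nat.factorial_succ,
          show s (L + 1) - (L + 1) + 1 = m + 1 - (L + 1) + 1 by omega]
        ring

end Thresholds

section Membership

variable {n k : ℕ} {s : ℕ → ℕ} {π : Equiv.Perm (Fin n)} {l0 i0 : ℕ}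

lemma sExt_of_le {l : ℕ} (hl : l ≤ k) : sExt n k s l = s l :=
  if_neg (by omega)

lemma sExt_le (hbdd : ∀ l ∈ Icc 1 k, l ≤ s l ∧ s l ≤ n - 1) {l : ℕ}
    (hl : l ∈ Icc 1 (k + 1)) : sExt n k s l ≤ n - 1 := by
  unfold sExt
  split_ifs with h
  · exact le_rfl
  · exact (hbdd l (mem_Icc.mpr ⟨(mem_Icc.mp hl).1, by have := (mem_Icc.mp hl).2; omega⟩)).2

lemma numPassed_lt_rho_of_isLeast (hs : MonotoneOn s (Set.Icc 1 l0)) (hl0k : l0 ≤ k)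
    (hi0 : i0 ≤ sExt n k s (l0 + 1)) (hT : IsLeast {l | IsThreshold n k s π l} l0)
    (hE : IsLeast {i | IsElem n k s π l0 i} i0) {i : ℕ} (hi : i ∈ Ico 1 i0) :
    numPassed s l0 i < rho n π i := by
  obtain ⟨hi1, hii0⟩ := mem_Ico.mp hi
  by_contra! hρ
  set c := numPassed s l0 i
  have hc1 : 1 ≤ c := (one_le_rho π hi1).trans hρ
  have hcl0 : c ≤ l0 := numPassed_le i
  have hsc : s c < i := (lt_iff_le_numPassed hs (mem_Icc.mpr ⟨hc1, hcl0⟩)).mpr le_rfl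
  rcases hcl0.lt_or_eq with hlt | heq
  · -- `i` lies in the block of the threshold `c < l0`, so `c` would be a smaller threshold
    have hi_le : i ≤ s (c + 1) := by
      by_contra! h
      have := (lt_iff_le_numPassed hs (mem_Icc.mpr ⟨by omega, hlt⟩)).mp h
      omega
    have : IsThreshold n k s π c :=
      ⟨hc1, by omega, i, by rwa [sExt_of_le (by omega)],
        by rwa [sExt_of_le (by omega)], hρ⟩
    exact absurd (hT.2 this) (by omega)
  · -- `i` would be an `l0`-element before `i0`
    have : IsElem n k s π l0 i :=
      ⟨by rwa [sExt_of_le hl0k, ← heq], by omega, heq ▸ hρ⟩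
    exact absurd (hE.2 this) (by omega)

lemma isLeast_elem_of_numPassed_lt_rho (hs : MonotoneOn s (Set.Icc 1 l0))
    (hl0 : l0 ∈ Icc 1 k) (hi0 : s l0 < i0 ∧ i0 ≤ sExt n k s (l0 + 1))
    (hρ : rho n π i0 ≤ l0)
    (hpass : ∀ i ∈ Ico 1 i0, numPassed s l0 i < rho n π i) :
    IsLeast {i | IsElem n k s π l0 i} i0 := by
  obtain ⟨hl01, hl0k⟩ := mem_Icc.mp hl0
  refine ⟨⟨by rw [sExt_of_le hl0k]; exact hi0.1, hi0.2, hρ⟩, fun i ⟨hsi, _, hρi⟩ => ?_⟩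
  rw [sExt_of_le hl0k] at hsi
  by_contra! hi
  have := numPassed_eq_self (s := s) (L := l0) (i := i) fun j hj =>
    (hs (by simpa using hj) ⟨hl01, le_rfl⟩ (mem_Icc.mp hj).2).trans_lt hsi
  have := hpass i (mem_Ico.mpr ⟨by omega, hi⟩)
  omega

lemma isLeast_threshold_of_numPassed_lt_rho (hs : MonotoneOn s (Set.Icc 1 l0))
    (hl0 : l0 ∈ Icc 1 k) (hi0 : s l0 < i0) (hE : IsElem n k s π l0 i0)
    (hpass : ∀ i ∈ Ico 1 i0, numPassed s l0 i < rho n π i) :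
    IsLeast {l | IsThreshold n k s π l} l0 := by
  obtain ⟨hl01, hl0k⟩ := mem_Icc.mp hl0
  refine ⟨⟨hl01, hl0k, i0, hE⟩, fun l ⟨hl1, hlk, i, hsi, his, hρi⟩ => ?_⟩
  by_contra! hl
  rw [sExt_of_le hlk] at hsi
  rw [sExt_of_le (by omega)] at his
  have hsl : s (l + 1) ≤ s l0 := hs ⟨by omega, by omega⟩ ⟨hl01, le_rfl⟩ (by omega)
  have := (lt_iff_le_numPassed hs (mem_Icc.mpr ⟨hl1, hl.le⟩)).mp hsi
  have := hpass i (mem_Ico.mpr ⟨by omega, by omega⟩)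
  omega

theorem isLeast_threshold_and_elem_iff (hs : MonotoneOn s (Set.Icc 1 l0))
    (hl0 : l0 ∈ Icc 1 k) (hi0 : s l0 < i0 ∧ i0 ≤ sExt n k s (l0 + 1)) :
    (IsLeast {l | IsThreshold n k s π l} l0 ∧ IsLeast {i | IsElem n k s π l0 i} i0) ↔
      rho n π i0 ≤ l0 ∧ ∀ i ∈ Ico 1 i0, numPassed s l0 i < rho n π i := by
  constructor
  · rintro ⟨hT, hE⟩
    exact ⟨hE.1.2.2, fun i hi =>
      numPassed_lt_rho_of_isLeast hs (mem_Icc.mp hl0).2 hi0.2 hT hE hi⟩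
  · rintro ⟨hρ, hpass⟩
    have hE := isLeast_elem_of_numPassed_lt_rho hs hl0 hi0 hρ hpass
    exact ⟨isLeast_threshold_of_numPassed_lt_rho hs hl0 hi0.1 hE.1 hpass, hE⟩

lemma lucky_iff_of_isLeast (hT : IsLeast {l | IsThreshold n k s π l} l0)
    (hE : IsLeast {i | IsElem n k s π l0 i} i0) : Lucky n k s π ↔ pv n π i0 ≤ k := by
  rw [Lucky, if_pos ⟨l0, hT.1⟩, hT.csInf_eq, hE.csInf_eq]

end Membership

section Values

variable {n k : ℕ} {Y Y' : Finset ℕ}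

lemma disjoint_of_subset_Icc (hY : Y ⊆ Icc 1 k) (hY' : Y' ⊆ Icc (k + 1) n) : Disjoint Y Y' :=
  disjoint_left.mpr fun x hx hx' => by
    have := mem_Icc.mp (hY hx)
    have := mem_Icc.mp (hY' hx')
    omega

lemma inter_Icc_eq_and_inter_Icc_eq_iff {S : Finset ℕ} (hS : S ⊆ Icc 1 n)
    (hY : Y ⊆ Icc 1 k) (hY' : Y' ⊆ Icc (k + 1) n) :
    S ∩ Icc 1 k = Y ∧ S ∩ Icc (k + 1) n = Y' ↔ S = Y ∪ Y' := by
  constructor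
  · rintro ⟨rfl, rfl⟩
    rw [← inter_union_distrib_left, eq_comm, inter_eq_left]
    exact hS.trans fun x hx => by simp only [mem_union, mem_Icc] at hx ⊢; omega
  · rintro rfl
    rw [union_inter_distrib_right, union_inter_distrib_right, inter_eq_left.mpr hY,
      inter_eq_left.mpr hY',
      disjoint_iff_inter_eq_empty.mp (disjoint_of_subset_Icc hY subset_rfl),
      disjoint_iff_inter_eq_empty.mp (disjoint_of_subset_Icc subset_rfl hY').symm,
      union_empty, empty_union]
    exact ⟨rfl, rfl⟩

/-- Among the first `i` values, exactly those in `Y` are at most `k`; so `π(i) ≤ k` exactly when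
no value of `Y'` lies below `π(i)`. -/
lemma pv_le_iff_rho_le_card (π : Equiv.Perm (Fin n)) {i : ℕ} (hi1 : 1 ≤ i) (hi : i ≤ n)
    (hY : Y ⊆ Icc 1 k) (hY' : Y' ⊆ Icc (k + 1) n)
    (himg : (Icc 1 i).image (pv n π) = Y ∪ Y') :
    pv n π i ≤ k ↔ rho n π i ≤ #Y := by
  have hmem : pv n π i ∈ Y ∪ Y' := himg ▸ mem_image_of_mem _ (by simp [hi1])
  rw [rho_eq_card_image π hi, himg, filter_union, card_union_of_disjoint
    ((disjoint_of_subset_Icc hY hY').mono (filter_subset _ _) (filter_subset _ _))]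
  by_cases hv : pv n π i ≤ k
  · have : {v ∈ Y' | v ≤ pv n π i} = ∅ :=
      filter_eq_empty_iff.mpr fun x hx => by have := mem_Icc.mp (hY' hx); omega
    simp [hv, this, card_filter_le]
  · have hYf : {v ∈ Y | v ≤ pv n π i} = Y :=
      filter_true_of_mem fun x hx => by have := mem_Icc.mp (hY hx); omega
    have hv' : pv n π i ∈ Y' :=
      (mem_union.mp hmem).resolve_left fun h => hv (mem_Icc.mp (hY h)).2
    have : 0 < #{v ∈ Y' | v ≤ pv n π i} :=
      card_pos.mpr ⟨_, mem_filter.mpr ⟨hv', le_rfl⟩⟩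
    simp only [hv, hYf, false_iff]
    omega

end Values

theorem SYYMem_iff {n k : ℕ} {s : ℕ → ℕ} {Y Y' : Finset ℕ} {l0 i0 : ℕ}
    {π : Equiv.Perm (Fin n)} (hs : MonotoneOn s (Set.Icc 1 l0)) (hl0 : l0 ∈ Icc 1 k)
    (hi0 : s l0 < i0 ∧ i0 ≤ sExt n k s (l0 + 1)) (hi0n : i0 ≤ n) (hY : Y ⊆ Icc 1 k)
    (hY' : Y' ⊆ Icc (k + 1) n) :
    SYYMem n k s Y Y' l0 i0 π ↔
      (rho n π i0 ≤ min #Y l0 ∧ ∀ i ∈ Ico 1 i0, numPassed s l0 i < rho n π i) ∧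
        (Icc 1 i0).image (pv n π) = Y ∪ Y' := by
  have hi01 : 1 ≤ i0 := by omega
  rw [SYYMem, SMem, inter_Icc_eq_and_inter_Icc_eq_iff (image_pv_subset π hi0n) hY hY']
  constructor
  · rintro ⟨⟨hL, hT, hE⟩, himg⟩
    obtain ⟨hρ, hpass⟩ := (isLeast_threshold_and_elem_iff hs hl0 hi0).mp ⟨hT, hE⟩
    have hρY := (pv_le_iff_rho_le_card π hi01 hi0n hY hY' himg).mp
      ((lucky_iff_of_isLeast hT hE).mp hL)
    exact ⟨⟨le_min hρY hρ, hpass⟩, himg⟩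
  · rintro ⟨⟨hρ, hpass⟩, himg⟩
    obtain ⟨hT, hE⟩ :=
      (isLeast_threshold_and_elem_iff hs hl0 hi0).mpr ⟨hρ.trans (min_le_right _ _), hpass⟩
    have hL := (lucky_iff_of_isLeast hT hE).mpr
      ((pv_le_iff_rho_le_card π hi01 hi0n hY hY' himg).mpr (hρ.trans (min_le_left _ _)))
    exact ⟨⟨hL, hT, hE⟩, himg⟩

section RankWindow

/-- The relative ranks allowed at position `i ≤ i0` for a permutation in `S(Y, Y', l0, i0)`,
where `y = #Y`. -/
def rankWindow (s : ℕ → ℕ) (l0 i0 y i : ℕ) : Finset ℕ :=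
  if i = i0 then Icc 1 (min y l0) else Ioc (numPassed s l0 i) i

variable {s : ℕ → ℕ} {l0 i0 : ℕ} (y : ℕ)

lemma forall_rho_mem_rankWindow_iff {n : ℕ} (π : Equiv.Perm (Fin n)) (hi0 : 1 ≤ i0) :
    (∀ i ∈ Icc 1 i0, rho n π i ∈ rankWindow s l0 i0 y i) ↔
      rho n π i0 ≤ min y l0 ∧ ∀ i ∈ Ico 1 i0, numPassed s l0 i < rho n π i := by
  rw [← Ico_insert_right hi0, forall_mem_insert, rankWindow, if_pos rfl, mem_Icc,
    and_iff_right (one_le_rho π hi0)]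
  refine and_congr_right' (forall₂_congr fun i hi => ?_)
  rw [rankWindow, if_neg (mem_Ico.mp hi).2.ne, mem_Ioc, and_iff_left (rho_le_self π i)]

lemma prod_card_rankWindow (hs : MonotoneOn s (Set.Icc 1 l0))
    (hb : ∀ j ∈ Icc 1 l0, j ≤ s j ∧ s j < i0) (hl0 : l0 < i0) :
    ∏ i ∈ Icc 1 i0, #(rankWindow s l0 i0 y i ∩ Icc 1 i) =
      min y l0 * ((i0 - l0 - 1).factorial * ∏ j ∈ Icc 1 l0, (s j - j + 1)) := by
  rw [← Ico_insert_right (by omega), prod_insert (by simp), rankWindow, if_pos rfl,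
    inter_eq_left.mpr (Icc_subset_Icc_right (by omega)), Nat.card_Icc, Nat.add_sub_cancel]
  congr 1
  calc ∏ i ∈ Ico 1 i0, #(rankWindow s l0 i0 y i ∩ Icc 1 i)
      = ∏ i ∈ Icc 1 (i0 - 1), (i - numPassed s l0 i) := by
        rw [← Ico_add_one_right_eq_Icc, Nat.sub_add_cancel (by omega)]
        refine prod_congr rfl fun i hi => ?_
        rw [rankWindow, if_neg (mem_Ico.mp hi).2.ne,
          inter_eq_left.mpr fun x hx => by simp only [mem_Ioc, mem_Icc] at hx ⊢; omega,
          Nat.card_Ioc]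
    _ = _ := by
        rw [prod_sub_numPassed _ hs fun j hj => ⟨(hb j hj).1, by have := (hb j hj).2; omega⟩,
          show i0 - 1 - l0 = i0 - l0 - 1 by omega]

end RankWindow

theorem card_SYY_general (n k : ℕ) (hkn : k < n) (s : ℕ → ℕ)
    (hmono : ∀ l ∈ Finset.Icc 1 (k - 1), s l ≤ s (l + 1))
    (hbdd : ∀ l ∈ Finset.Icc 1 k, l ≤ s l ∧ s l ≤ n - 1)
    (l0 i0 : ℕ) (hl0 : l0 ∈ Finset.Icc 1 k)
    (hi0 : s l0 < i0 ∧ i0 ≤ sExt n k s (l0 + 1))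
    (Y Y' : Finset ℕ) (hY : Y ⊆ Finset.Icc 1 k) (hY' : Y' ⊆ Finset.Icc (k + 1) n)
    (hcard : Y.card + Y'.card = i0) :
    (Nat.card {π : Equiv.Perm (Fin n) // SYYMem n k s Y Y' l0 i0 π} : ℝ) =
      (min Y.card l0 : ℝ) * (Nat.factorial (i0 - l0 - 1) : ℝ) *
        (Nat.factorial (n - i0) : ℝ) * ∏ j ∈ Finset.Icc 1 l0, ((s j : ℝ) - j + 1) := by
  obtain ⟨hl01, hl0k⟩ := mem_Icc.mp hl0
  have hs : MonotoneOn s (Set.Icc 1 l0) := monotoneOn_of_le_add_one Set.ordConnected_Icc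
    fun a _ ha ha1 => hmono a (mem_Icc.mpr ⟨ha.1, by have := ha1.2; omega⟩)
  have hb (j) (hj : j ∈ Icc 1 l0) : j ≤ s j ∧ s j < i0 :=
    ⟨(hbdd j (Icc_subset_Icc_right hl0k hj)).1,
      (hs (by simpa using hj) ⟨hl01, le_rfl⟩ (mem_Icc.mp hj).2).trans_lt hi0.1⟩
  have hi0n : i0 ≤ n := by
    have := sExt_le hbdd (l := l0 + 1) (mem_Icc.mpr ⟨by omega, by omega⟩)
    omega
  have hV : Y ∪ Y' ⊆ Icc 1 n := union_subset (hY.trans (Icc_subset_Icc_right hkn.le))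
    (hY'.trans (Icc_subset_Icc_left (by omega)))
  have hVcard : #(Y ∪ Y') = i0 := by
    rw [card_union_of_disjoint (disjoint_of_subset_Icc hY hY'), hcard]
  have hcast : ((∏ j ∈ Icc 1 l0, (s j - j + 1) : ℕ) : ℝ) =
      ∏ j ∈ Icc 1 l0, ((s j : ℝ) - j + 1) := by
    push_cast
    exact prod_congr rfl fun j hj => by rw [Nat.cast_sub (hb j hj).1]
  rw [Nat.card_congr (Equiv.subtypeEquivRight fun π =>
      (SYYMem_iff hs hl0 hi0 hi0n hY hY').trans
        (and_congr_left' (forall_rho_mem_rankWindow_iff #Y π (by omega)).symm)),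
    card_rho_mem_and_image_pv_eq hi0n hV hVcard,
    prod_card_rankWindow _ hs hb ((hbdd l0 hl0).1.trans_lt hi0.1)]
  simp only [Nat.cast_mul, Nat.cast_min, hcast]
  ring

theorem card_SYY (n k : ℕ) (hk : 1 ≤ k) (hkn : k < n) (s : ℕ → ℕ)
    (hmono : ∀ l ∈ Finset.Icc 1 (k - 1), s l ≤ s (l + 1))
    (hbdd : ∀ l ∈ Finset.Icc 1 k, l ≤ s l ∧ s l ≤ n - 1)
    (l0 i0 : ℕ) (hl0 : l0 ∈ Finset.Icc 1 k)
    (hi0 : s l0 < i0 ∧ i0 ≤ sExt n k s (l0 + 1))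
    (Y Y' : Finset ℕ) (hY : Y ⊆ Finset.Icc 1 k) (hY' : Y' ⊆ Finset.Icc (k + 1) n)
    (hcard : Y.card + Y'.card = i0) :
    (Nat.card {π : Equiv.Perm (Fin n) // SYYMem n k s Y Y' l0 i0 π} : ℝ) =
      (min Y.card l0 : ℝ) * (Nat.factorial (i0 - l0 - 1) : ℝ) *
        (Nat.factorial (n - i0) : ℝ) * ∏ j ∈ Finset.Icc 1 l0, ((s j : ℝ) - j + 1) :=
  card_SYY_general n k hkn s hmono hbdd l0 i0 hl0 hi0 Y Y' hY hY' hcard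
end Secretary
end

section
/- A sequence w = (x_1,...,x_k) ∈ X^{(k)} is an optimal point of the map T if and only if for every l ∈ {1,...,k} the letter x_l is an optimal point of the map F_{l,σ^l(w)}. -/
open Finset

namespace Secretary

/-! Put `D_l(w) := r_{l-1}(x_1) - T_l(w)`, so that `D_0 = -T` and `D_k` is constant. Unfolding
one step of `T_l` and the binomial identity `c_l(x) = r_{l-1}(x) - (x - l) r_l(x)` give, for
`x ∈ X_{l+1}`, `D_l(x u) = c_l(x) + (x - l) D_{l+1}(u) = -F_{l+1,u}(x) - l D_{l+1}(u)`.
The slopes `x - l` are positive, so Bellman's principle applies: `x u` minimises `D_l` iff `u`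
minimises `D_{l+1}` and `x` maximises `F_{l+1,u}`. Downward induction from `l = k` gives the
theorem. -/

@[to_additive]
lemma prod_Icc_succ_bot {M : Type*} [CommMonoid M] {a b : ℕ} (hab : a ≤ b + 1) (f : ℕ → M) :
    ∏ j ∈ Icc a (b + 1), f j = f a * ∏ j ∈ Icc a b, f (j + 1) := by
  rw [← insert_Icc_add_one_left_eq_Icc hab, prod_insert (by simp), ← image_add_right_Icc,
    prod_image (by simp)]

lemma choose_mul_choose_sub_comm (n a b : ℕ) :
    n.choose a * (n - a).choose b = n.choose b * (n - b).choose a := by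
  have h₁ := Nat.choose_mul (n := n) (s := a) (Nat.le_add_right a b)
  have h₂ := Nat.choose_mul (n := n) (s := b) (Nat.le_add_left b a)
  rw [Nat.add_sub_cancel_left] at h₁
  rw [Nat.add_sub_cancel] at h₂
  rw [← h₁, ← h₂, Nat.choose_symm_add]

lemma sum_range_succ_mul_choose_mul {k : ℕ} (hk : 1 ≤ k) (M : ℕ) (g : ℕ → ℝ) :
    ∑ j ∈ range (M + 1), (j : ℝ) * (k.choose j * g j) =
      k * ∑ i ∈ range M, (k - 1).choose i * g (i + 1) := by
  rw [sum_range_succ', mul_sum]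
  simp only [CharP.cast_eq_zero, zero_mul, add_zero]
  refine sum_congr rfl fun i _ => ?_
  have h := Nat.add_one_mul_choose_eq (k - 1) i
  rw [Nat.sub_add_cancel hk] at h
  have h' : (k : ℝ) * (k - 1).choose i = k.choose (i + 1) * (i + 1) := by exact_mod_cast h
  push_cast
  linear_combination (-g (i + 1)) * h'

lemma Cb_natCast (a b : ℕ) : Cb a b = a.choose b := by
  unfold Cb
  split_ifs with h
  · simp only [Int.toNat_natCast]
  · rw [Nat.choose_eq_zero_of_lt (by omega), Nat.cast_zero]

lemma Cb_eq_choose {a b : ℤ} {a' b' : ℕ} (ha : a = a') (hb : b = b') :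
    Cb a b = a'.choose b' := by
  rw [ha, hb, Cb_natCast]

lemma rr_of_neg (n k : ℕ) {l : ℤ} (hl : l < 0) (x : ℕ) : rr n k l x = 0 := if_pos hl

lemma rr_natCast (n k : ℕ) {m : ℕ} (hm : 1 ≤ m) (x : ℕ) :
    rr n k m x = ((x - m - 1).factorial / x.factorial : ℝ) *
      (1 - 1 / (m * Cb n x) *
        ∑ j ∈ range (m + 1),
          ((m : ℝ) - j) * Cb k j * Cb ((n : ℤ) - k) ((x : ℤ) - j)) := by
  rw [rr, if_neg (by omega), if_neg (by omega), Int.toNat_natCast, Int.cast_natCast]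

lemma c_zero_eq {n k x : ℕ} (hx : 1 ≤ x) : c n k 0 x = -(x * rr n k 0 x) := by
  have hx0 : (x : ℝ) ≠ 0 := by positivity
  simp only [c, d, rr, Nat.sub_zero, if_true, lt_irrefl, if_false]
  field_simp
  ring

lemma c_one_eq {n k x : ℕ} (hk : 1 ≤ k) (hkn : k ≤ n) (hx : 2 ≤ x) (hxn : x < n) :
    c n k 1 x = rr n k 0 x - ((x : ℝ) - 1) * rr n k 1 x := by
  obtain ⟨y, rfl⟩ : ∃ y, x = y + 2 := ⟨x - 2, by omega⟩
  obtain ⟨N, rfl⟩ : ∃ N, n = N + y + 3 := ⟨n - y - 3, by omega⟩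
  have hr1 := rr_natCast (N + y + 3) k (le_refl 1) (y + 2)
  rw [Nat.cast_one] at hr1
  rw [c, d, if_neg one_ne_zero, if_pos rfl, hr1, rr, if_neg (by omega), if_pos rfl,
    show y + 2 - 1 = y + 1 from rfl, sum_Icc_succ_top (b := y + 1) (by omega), sum_range_succ,
    sum_range_one, Cb_natCast k 0,
    show ((N + y + 3 : ℕ) : ℤ) - ((y + 2 : ℕ) : ℤ) - 1 = (N : ℕ) by push_cast; ring,
    show (k : ℤ) - 1 = ((k - 1 : ℕ) : ℤ) by omega,
    show ((N + y + 3 : ℕ) : ℤ) - (k : ℤ) = ((N + y + 3 - k : ℕ) : ℤ) by omega]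
  simp only [Cb_natCast, Nat.cast_one, CharP.cast_eq_zero, sub_zero, one_mul,
    Nat.choose_zero_right, sub_self, zero_mul, add_zero, Nat.add_sub_cancel]
  have hCk : ((N + y + 3).choose k : ℝ) ≠ 0 := by exact_mod_cast (Nat.choose_pos hkn).ne'
  have hCx : ((N + y + 3).choose (y + 2) : ℝ) ≠ 0 := by
    exact_mod_cast (Nat.choose_pos hxn.le).ne'
  have hpascal : (N.choose (k - 1) : ℝ) = (N + 1).choose k - N.choose k := by
    rw [Nat.choose_succ_left N k hk]
    push_cast
    ring
  have hswap : ((N + y + 3 - k).choose (y + 2) : ℝ) =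
      (N + y + 3).choose (y + 2) * (N + 1).choose k / (N + y + 3).choose k := by
    have h := choose_mul_choose_sub_comm (N + y + 3) (y + 2) k
    rw [show N + y + 3 - (y + 2) = N + 1 by omega] at h
    rw [eq_div_iff hCk, mul_comm]
    exact_mod_cast h.symm
  have hfact : ((y + 2).factorial : ℝ) = (y + 2) * (y + 1) * y.factorial := by
    push_cast [Nat.factorial_succ]
    ring
  rw [hpascal, hswap, hfact]
  push_cast
  field_simp
  ring

lemma c_eq_of_two_le {n k p x : ℕ} (hk : 1 ≤ k) (hx : p + 3 ≤ x) (hxn : x ≤ n) :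
    c n k (p + 2) x =
      rr n k (p + 1 : ℕ) x - ((x : ℝ) - (p + 2 : ℕ)) * rr n k (p + 2 : ℕ) x := by
  obtain ⟨y, rfl⟩ : ∃ y, x = y + p + 3 := ⟨x - p - 3, by omega⟩
  set g : ℕ → ℝ := fun j => Cb ((n : ℤ) - k) ((y + p + 3 : ℕ) - (j : ℤ)) with hg
  set A := ∑ j ∈ range (p + 2), (k.choose j : ℝ) * g j
  set T := ∑ i ∈ range (p + 1), ((k - 1).choose i : ℝ) * g (i + 1)
  -- Both `r`-sums have the form `c A - B` with `B = ∑ j C(k,j) g j = k T`, so `A` cancels.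
  have hS : ∀ c : ℝ, ∑ j ∈ range (p + 2), (c - j) * Cb k j * g j = c * A - k * T := by
    intro c
    simp only [Cb_natCast, mul_assoc, sub_mul, sum_sub_distrib]
    rw [sum_range_succ_mul_choose_mul hk, ← mul_sum]
  have hT : ∑ j ∈ range (p + 1), Cb ((k : ℤ) - 1) j *
      Cb ((n : ℤ) - k) ((y + 1 : ℕ) + ((p + 2 : ℕ) : ℤ) - j - 1) = T := by
    refine sum_congr rfl fun j _ => ?_
    rw [Cb_eq_choose (a' := k - 1) (by omega) rfl, hg]
    congr 2
    push_cast
    ring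
  rw [c, d, if_neg (by omega), if_neg (by omega), rr_natCast n k (by omega),
    rr_natCast n k (by omega), sum_range_succ (n := p + 2), sub_self, zero_mul, zero_mul,
    add_zero, show p + 1 + 1 = p + 2 from rfl, show p + 2 - 1 = p + 1 from rfl,
    show y + p + 3 - (p + 2) = y + 1 by omega, show y + p + 3 - (p + 1) - 1 = y + 1 by omega,
    show y + 1 - 1 = y from rfl, show n - (p + 2) - (y + 1) = n - (y + p + 3) by omega, hT,
    hS, hS, Cb_natCast]
  have hfact : (n.choose (y + p + 3) : ℝ) * (y + p + 3).factorial *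
      (n - (y + p + 3)).factorial = n.factorial := by
    exact_mod_cast Nat.choose_mul_factorial_mul_factorial hxn
  have hfy : ((y + 1).factorial : ℝ) = (y + 1) * y.factorial := by
    push_cast [Nat.factorial_succ]
    ring
  have hC : (n.choose (y + p + 3) : ℝ) ≠ 0 := by exact_mod_cast (Nat.choose_pos hxn).ne'
  rw [← hfact, hfy, show ((p + 2 : ℕ) : ℝ) - 1 = p + 1 by push_cast; ring]
  push_cast
  field_simp
  ring

lemma c_eq_rr {n k m x : ℕ} (hm : m < k) (hkn : k < n) (hx : m + 1 ≤ x) (hxn : x ≤ n - 1) :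
    c n k m x = rr n k ((m : ℤ) - 1) x - ((x : ℝ) - m) * rr n k m x := by
  rcases m with _ | _ | p
  · rw [c_zero_eq hx, rr_of_neg n k (show ((0 : ℕ) : ℤ) - 1 < 0 by norm_num)]
    push_cast
    ring
  · rw [c_one_eq (by omega) hkn.le hx (by omega)]
    norm_num
  · rw [c_eq_of_two_le (by omega) hx (by omega),
      show ((p + 2 : ℕ) : ℤ) - 1 = (p + 1 : ℕ) by omega]

lemma Gam_one_eq_prod {n k l j : ℕ} (hj : j ≤ k - l) (v : ℕ → ℕ) :
    Gam n k l 1 j v = ∏ t ∈ Icc 1 j, ((v t : ℝ) - l - t + 1) := by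
  unfold Gam
  split_ifs with h
  · rfl
  · obtain rfl : j = 0 := by omega
    simp

lemma Gam_one_succ {n k l j : ℕ} (hj : j + 1 ≤ k - l) (v : ℕ → ℕ) :
    Gam n k l 1 (j + 1) v = ((v 1 : ℝ) - l) * Gam n k (l + 1) 1 j (shift 1 v) := by
  rw [Gam_one_eq_prod hj, Gam_one_eq_prod (by omega), prod_Icc_succ_bot (by omega)]
  simp only [shift]
  congr 1
  · ring
  · refine prod_congr rfl fun t _ => ?_
    rw [add_comm 1 t]
    push_cast
    ring

lemma Rmap_one {n k l : ℕ} (hl : l < k) (v : ℕ → ℕ) :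
    Rmap n k l v 1 = rr n k l (v 1) - rr n k l (if l + 1 = k then n - 1 else v 2) := by
  simp only [Rmap, show (1 = k - l) ↔ (l + 1 = k) by omega, Nat.cast_one, add_sub_cancel_right]
  rw [if_pos (by omega)]

lemma Rmap_succ {n k l j : ℕ} (hj : 1 ≤ j) (v : ℕ → ℕ) :
    Rmap n k l v (j + 1) = Rmap n k (l + 1) (shift 1 v) j := by
  simp only [Rmap, shift, show (j + 1 ≤ k - l) ↔ (j ≤ k - (l + 1)) by omega,
    show (j + 1 = k - l) ↔ (j = k - (l + 1)) by omega, show 1 + j = j + 1 by omega,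
    show 1 + (j + 1) = j + 1 + 1 by omega]
  push_cast
  rw [show (l : ℤ) + (j + 1) - 1 = l + 1 + j - 1 by ring]
  simp [hj]

lemma Dmap_succ (n k l : ℕ) (u : ℕ → ℕ) :
    Dmap n k (l + 1) u = rr n k l (if l + 1 = k then n - 1 else u 1) - Tmap n k (l + 1) u := by
  simp only [Dmap, Nat.cast_succ, add_sub_cancel_right]

lemma Tmap_eq_mul (n k : ℕ) {l : ℕ} (hl : l < k) (v : ℕ → ℕ) :
    Tmap n k l v = ((v 1 : ℝ) - l) * (rr n k l (v 1) - Dmap n k (l + 1) (shift 1 v)) := by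
  obtain ⟨m, hm⟩ : ∃ m, k - l = m + 1 := ⟨k - l - 1, by omega⟩
  have hm' : k - (l + 1) = m := by omega
  have hsum : ∑ j ∈ Icc 1 m, Rmap n k l v (j + 1) * Gam n k l 1 (j + 1) v =
      ((v 1 : ℝ) - l) * ∑ j ∈ Icc 1 m,
        Rmap n k (l + 1) (shift 1 v) j * Gam n k (l + 1) 1 j (shift 1 v) := by
    rw [mul_sum]
    refine sum_congr rfl fun j hj => ?_
    rw [mem_Icc] at hj
    rw [Rmap_succ hj.1, Gam_one_succ (by omega)]
    ring
  have hGam0 : Gam n k (l + 1) 1 0 (shift 1 v) = 1 := by simp [Gam]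
  rw [Dmap_succ, shift, Tmap, Tmap, hm, hm', sum_Icc_succ_bot (by omega), hsum,
    Gam_one_succ (j := m) (by omega), Gam_one_succ (j := 0) (by omega), hGam0, Rmap_one hl]
  ring

section Congr

variable {n k l : ℕ} {u u' : ℕ → ℕ}

lemma Gam_congr (h : Set.EqOn u u' (Set.Ici 1)) (j j' : ℕ) :
    Gam n k l j j' u = Gam n k l j j' u' := by
  unfold Gam
  split_ifs with hj
  · exact prod_congr rfl fun t ht => by rw [h (hj.1.trans (mem_Icc.1 ht).1)]
  · rfl

lemma Rmap_congr (h : Set.EqOn u u' (Set.Ici 1)) (j : ℕ) :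
    Rmap n k l u j = Rmap n k l u' j := by
  unfold Rmap
  split_ifs with hj
  · rw [h (show 1 ≤ j from hj.1)]
  · rw [h (show 1 ≤ j from hj.1), h (show 1 ≤ j + 1 by omega)]
  · rfl

lemma Tmap_congr (h : Set.EqOn u u' (Set.Ici 1)) : Tmap n k l u = Tmap n k l u' := by
  simp only [Tmap, Rmap_congr h, Gam_congr h]

lemma Dmap_congr (h : Set.EqOn u u' (Set.Ici 1)) : Dmap n k l u = Dmap n k l u' := by
  rw [Dmap, Dmap, Tmap_congr h, h (show 1 ≤ 1 from le_rfl)]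

end Congr

def prepend (x : ℕ) (u : ℕ → ℕ) : ℕ → ℕ := fun j => if j = 1 then x else u (j - 1)

@[simp]
lemma prepend_one (x : ℕ) (u : ℕ → ℕ) : prepend x u 1 = x := if_pos rfl

lemma shift_one_prepend (x : ℕ) (u : ℕ → ℕ) :
    Set.EqOn (shift 1 (prepend x u)) u (Set.Ici 1) :=
  fun t (ht : 1 ≤ t) => by
    simp only [shift, prepend, if_neg (show 1 + t ≠ 1 by omega), Nat.add_sub_cancel_left]

lemma memX_prepend {n k l x : ℕ} {u : ℕ → ℕ} (hx : l + 1 ≤ x ∧ x ≤ n - 1)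
    (hu : memX n k (l + 1) u) : memX n k l (prepend x u) := by
  intro j hj
  rw [mem_Icc] at hj
  rcases eq_or_ne j 1 with rfl | hj1
  · simpa using hx
  · have := hu (j - 1) (mem_Icc.2 ⟨by omega, by omega⟩)
    simp only [prepend, if_neg hj1]
    omega

lemma memX_shift_one {n k l : ℕ} {u : ℕ → ℕ} (hu : memX n k l u) :
    memX n k (l + 1) (shift 1 u) := by
  intro j hj
  rw [mem_Icc] at hj
  have := hu (1 + j) (mem_Icc.2 ⟨by omega, by omega⟩)
  simp only [shift]
  omega

lemma shift_add (a b : ℕ) (w : ℕ → ℕ) : shift a (shift b w) = shift (b + a) w := by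
  funext j
  simp only [shift, add_assoc]

lemma shift_zero (w : ℕ → ℕ) : shift 0 w = w := by
  funext j
  simp only [shift, zero_add]

lemma Dmap_zero (n k : ℕ) (u : ℕ → ℕ) : Dmap n k 0 u = -Tmap n k 0 u := by
  simp [Dmap, rr]

lemma Dmap_self (n k : ℕ) (u : ℕ → ℕ) :
    Dmap n k k u = rr n k ((k : ℤ) - 1) (n - 1) - xi n k := by
  simp [Dmap, Tmap, Gam]

lemma lt_of_memX {n k l : ℕ} {u : ℕ → ℕ} (hl : l < k) (hu : memX n k l u) : k < n := by
  have := hu (k - l) (mem_Icc.2 ⟨by omega, le_rfl⟩)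
  omega

lemma memX_shift {n k : ℕ} {w : ℕ → ℕ} (hw : memX n k 0 w) (l : ℕ) :
    memX n k l (shift l w) := by
  induction l with
  | zero => rwa [shift_zero]
  | succ l ih => simpa only [shift_add] using memX_shift_one ih

lemma Dmap_eq_Fmap {n k l : ℕ} (hl : l < k) (hkn : k < n) {u : ℕ → ℕ} (hu : l + 1 ≤ u 1)
    (hu' : u 1 ≤ n - 1) :
    Dmap n k l u = -Fmap n k (l + 1) (shift 1 u) (u 1) - l * Dmap n k (l + 1) (shift 1 u) := by
  rw [Dmap, if_neg hl.ne, Tmap_eq_mul n k hl, Fmap, Nat.add_sub_cancel, c_eq_rr hl hkn hu hu']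
  ring

lemma Dmap_sub_Dmap {n k l : ℕ} (hl : l < k) {u v : ℕ → ℕ} (hu : memX n k l u)
    (hv : memX n k l v) :
    Dmap n k l v - Dmap n k l u =
      Fmap n k (l + 1) (shift 1 u) (u 1) - Fmap n k (l + 1) (shift 1 u) (v 1) +
        ((v 1 : ℝ) - l) * (Dmap n k (l + 1) (shift 1 v) - Dmap n k (l + 1) (shift 1 u)) := by
  have hkn := lt_of_memX hl hu
  have hu1 := hu 1 (mem_Icc.2 ⟨le_rfl, by omega⟩)
  have hv1 := hv 1 (mem_Icc.2 ⟨le_rfl, by omega⟩)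
  rw [Dmap_eq_Fmap hl hkn hu1.1 hu1.2, Dmap_eq_Fmap hl hkn hv1.1 hv1.2, Fmap, Fmap, Fmap]
  ring

lemma isMinOn_Dmap_iff {n k l : ℕ} (hl : l < k) {u : ℕ → ℕ} (hu : memX n k l u) :
    IsMinOn (Dmap n k l) {v | memX n k l v} u ↔
      IsMinOn (Dmap n k (l + 1)) {v | memX n k (l + 1) v} (shift 1 u) ∧
        IsMaxOn (Fmap n k (l + 1) (shift 1 u)) (Set.Icc (l + 1) (n - 1)) (u 1) := by
  have hu1 := hu 1 (mem_Icc.2 ⟨le_rfl, by omega⟩)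
  simp only [isMinOn_iff, isMaxOn_iff, Set.mem_Icc]
  constructor
  · intro hmin
    refine ⟨fun u' hu' => ?_, fun y hy => ?_⟩
    · have hv := memX_prepend hu1 hu'
      have hd := Dmap_sub_Dmap hl hu hv
      rw [prepend_one, Dmap_congr (shift_one_prepend _ _), sub_self, zero_add] at hd
      have hpos : (0 : ℝ) < (u 1 : ℝ) - l := by
        have : (l : ℝ) + 1 ≤ u 1 := by exact_mod_cast hu1.1
        linarith
      have := hmin _ hv
      nlinarith
    · have hv := memX_prepend hy (memX_shift_one hu)
      have hd := Dmap_sub_Dmap hl hu hv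
      rw [prepend_one, Dmap_congr (shift_one_prepend _ _), sub_self, mul_zero, add_zero] at hd
      linarith [hmin _ hv]
  · rintro ⟨hmin, hmax⟩ v hv
    have hv1 := hv 1 (mem_Icc.2 ⟨le_rfl, by omega⟩)
    have hd := Dmap_sub_Dmap hl hu hv
    have hpos : (0 : ℝ) ≤ (v 1 : ℝ) - l := by
      have : (l : ℝ) + 1 ≤ v 1 := by exact_mod_cast hv1.1
      linarith
    nlinarith [hmax _ hv1, hmin _ (memX_shift_one hv)]

lemma isMinOn_Dmap_shift_iff {n k : ℕ} {w : ℕ → ℕ} (hw : memX n k 0 w) {l : ℕ}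
    (hl : l ≤ k) :
    IsMinOn (Dmap n k l) {v | memX n k l v} (shift l w) ↔
      ∀ j ∈ Icc (l + 1) k, IsMaxOn (Fmap n k j (shift j w)) (Set.Icc j (n - 1)) (w j) := by
  induction hl using Nat.decreasingInduction with
  | self =>
    simp only [isMinOn_iff, Dmap_self, le_refl, implies_true, true_iff]
    exact fun j hj => absurd (mem_Icc.1 hj) (by omega)
  | of_succ l hl ih =>
    rw [isMinOn_Dmap_iff hl (memX_shift hw l), shift_add, ih,
      ← insert_Icc_add_one_left_eq_Icc (show l + 1 ≤ k from hl), forall_mem_insert]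
    simp only [shift, and_comm]

theorem optimal_point_T_iff_general (n k : ℕ) (w : ℕ → ℕ)
    (hw : memX n k 0 w) :
    (∀ v : ℕ → ℕ, memX n k 0 v → Tmap n k 0 v ≤ Tmap n k 0 w) ↔
      ∀ l ∈ Finset.Icc 1 k, ∀ x ∈ Finset.Icc l (n - 1),
        Fmap n k l (shift l w) x ≤ Fmap n k l (shift l w) (w l) := by
  have h := isMinOn_Dmap_shift_iff hw (Nat.zero_le k)
  simp only [shift_zero, isMinOn_iff, isMaxOn_iff, Dmap_zero, neg_le_neg_iff, Set.mem_Icc,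
    ← mem_Icc] at h
  exact h

theorem optimal_point_T_iff (n k : ℕ) (hk : 1 ≤ k) (hkn : k < n) (w : ℕ → ℕ)
    (hw : memX n k 0 w) :
    (∀ v : ℕ → ℕ, memX n k 0 v → Tmap n k 0 v ≤ Tmap n k 0 w) ↔
      ∀ l ∈ Finset.Icc 1 k, ∀ x ∈ Finset.Icc l (n - 1),
        Fmap n k l (shift l w) x ≤ Fmap n k l (shift l w) (w l) :=
  optimal_point_T_iff_general n k w hw
end Secretary
end
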